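/- arXiv:1206.2976 — 2 statements merged into one kernel-verified Lean document; each statement's English description precedes it below -/
import Mathlib

section
/- Ertel theorem, density case (Theorem 2.3): Let u, η : ℝ × E → E and ρ : ℝ × E → ℝ be smooth. Assume ρ satisfies the continuity equation ∂t ρ + div(ρu) = 0 everywhere, and η satisfies the relabelling-symmetry equation ∂t η + [u,η] = 0 everywhere. Then the scalar field σ := div(ρη) satisfies the local conservation law ∂t σ + div(σ·u) = 0 everywhere. -/
open scoped RealInnerProductSpace
open MeasureTheory
noncomputable section

/-- Spatial Fréchet derivative `D_x w(t,x)` of a time-dependent field. -/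
def Dx {n : ℕ} {F : Type*} [NormedAddCommGroup F] [NormedSpace ℝ F]
    (w : ℝ × EuclideanSpace ℝ (Fin n) → F) (t : ℝ) (x : EuclideanSpace ℝ (Fin n)) :
    EuclideanSpace ℝ (Fin n) →L[ℝ] F :=
  fderiv ℝ (fun y => w (t, y)) x

/-- Partial time derivative `∂ₜ w(t,x)` of a time-dependent field. -/
def dt {n : ℕ} {F : Type*} [NormedAddCommGroup F] [NormedSpace ℝ F]
    (w : ℝ × EuclideanSpace ℝ (Fin n) → F) (t : ℝ) (x : EuclideanSpace ℝ (Fin n)) : F :=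
  deriv (fun τ => w (τ, x)) t

/-- Lie bracket `[u,η](t,x) = D_x η(t,x)(u(t,x)) − D_x u(t,x)(η(t,x))`. -/
def bracket {n : ℕ} (u η : ℝ × EuclideanSpace ℝ (Fin n) → EuclideanSpace ℝ (Fin n))
    (t : ℝ) (x : EuclideanSpace ℝ (Fin n)) : EuclideanSpace ℝ (Fin n) :=
  Dx η t x (u (t, x)) - Dx u t x (η (t, x))

/-- Divergence `div w(t,x) = trace (D_x w(t,x))`. -/
def dive {n : ℕ} (w : ℝ × EuclideanSpace ℝ (Fin n) → EuclideanSpace ℝ (Fin n))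
    (t : ℝ) (x : EuclideanSpace ℝ (Fin n)) : ℝ :=
  LinearMap.trace ℝ _ (Dx w t x : EuclideanSpace ℝ (Fin n) →ₗ[ℝ] EuclideanSpace ℝ (Fin n))

/-- Spatial gradient of a time-dependent scalar field. -/
def grad {n : ℕ} (f : ℝ × EuclideanSpace ℝ (Fin n) → ℝ) (t : ℝ)
    (x : EuclideanSpace ℝ (Fin n)) : EuclideanSpace ℝ (Fin n) :=
  gradient (fun y => f (t, y)) x

/-! ### Auxiliary material for the proof of `ertel_density`. -/

section ErtelAux

open ContinuousLinearMap

variable {n : ℕ} {F : Type*} [NormedAddCommGroup F] [NormedSpace ℝ F]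

local notation "E'" => EuclideanSpace ℝ (Fin n)

/-- The spatial basis directions inside `ℝ × E`. -/
def Xv (n : ℕ) (i : Fin n) : ℝ × EuclideanSpace ℝ (Fin n) :=
  ((0 : ℝ), EuclideanSpace.single i 1)

/-- The time direction inside `ℝ × E`. -/
def Tv (n : ℕ) : ℝ × EuclideanSpace ℝ (Fin n) := ((1 : ℝ), 0)

lemma ertel_trace_eq_sum (L : E' →ₗ[ℝ] E') :
    LinearMap.trace ℝ _ L = ∑ i, L (EuclideanSpace.single i 1) i := by
  classical
  rw [LinearMap.trace_eq_matrix_trace ℝ (EuclideanSpace.basisFun (Fin n) ℝ).toBasis]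
  rw [Matrix.trace]
  refine Finset.sum_congr rfl fun i _ => ?_
  simp [Matrix.diag, LinearMap.toMatrix_apply, OrthonormalBasis.coe_toBasis_repr_apply,
    EuclideanSpace.basisFun_repr, EuclideanSpace.basisFun_apply]

lemma dt_eq (w : ℝ × E' → F) (t : ℝ) (x : E') (hw : DifferentiableAt ℝ w (t, x)) :
    dt w t x = fderiv ℝ w (t, x) (Tv n) := by
  have h1 : HasFDerivAt (fun τ : ℝ => (τ, x)) (inl ℝ ℝ E') t := hasFDerivAt_prodMk_left t x
  have h2 : HasDerivAt (fun τ => w (τ, x)) (fderiv ℝ w (t, x) (Tv n)) t := by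
    have := (hw.hasFDerivAt.comp t h1).hasDerivAt
    simpa [Tv, Function.comp_def] using this
  exact h2.deriv

lemma Dx_apply (w : ℝ × E' → F) (t : ℝ) (x : E') (hw : DifferentiableAt ℝ w (t, x)) (v : E') :
    Dx w t x v = fderiv ℝ w (t, x) (0, v) := by
  have h1 : HasFDerivAt (fun y : E' => (t, y)) (inr ℝ ℝ E') x := hasFDerivAt_prodMk_right t x
  have h2 : HasFDerivAt (fun y => w (t, y)) ((fderiv ℝ w (t, x)).comp (inr ℝ ℝ E')) x :=
    hw.hasFDerivAt.comp x h1
  rw [Dx, h2.fderiv]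
  simp

lemma pair_decomp (L : (ℝ × E') →L[ℝ] F) (v : E') :
    L ((0:ℝ), v) = ∑ j, v j • L (Xv n j) := by
  classical
  have hv : ((0:ℝ), v) = ∑ j, v j • ((Xv n j) : ℝ × E') := by
    refine Prod.ext ?_ ?_
    · simp [Prod.fst_sum, Xv]
    · simp only [Prod.snd_sum, Prod.smul_snd, Xv]
      have := (EuclideanSpace.basisFun (Fin n) ℝ).sum_repr v
      simp only [EuclideanSpace.basisFun_repr, EuclideanSpace.basisFun_apply] at this
      exact this.symm
  rw [hv, map_sum]
  refine Finset.sum_congr rfl fun j _ => ?_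
  rw [_root_.map_smul]

lemma dive_eq (w : ℝ × E' → E') (t : ℝ) (x : E') (hw : DifferentiableAt ℝ w (t, x)) :
    dive w t x = ∑ i, fderiv ℝ w (t, x) (Xv n i) i := by
  rw [dive, ertel_trace_eq_sum]
  refine Finset.sum_congr rfl fun i _ => ?_
  have h := Dx_apply w t x hw (EuclideanSpace.single i 1)
  have : (Dx w t x : E' →ₗ[ℝ] E') (EuclideanSpace.single i 1)
      = Dx w t x (EuclideanSpace.single i 1) := rfl
  rw [this, h]
  rfl

lemma contDiff_fderiv_apply {g : ℝ × E' → F} (hg : ContDiff ℝ (⊤ : ℕ∞) g) (v : ℝ × E') :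
    ContDiff ℝ (⊤ : ℕ∞) fun q => fderiv ℝ g q v :=
  (ContinuousLinearMap.apply ℝ F v).contDiff.comp (hg.fderiv_right (by simp))

lemma fderiv_fderiv_apply {g : ℝ × E' → F} (hg : ContDiff ℝ (⊤ : ℕ∞) g) (p v w : ℝ × E') :
    fderiv ℝ (fun q => fderiv ℝ g q v) p w = fderiv ℝ (fderiv ℝ g) p w v := by
  have hd : DifferentiableAt ℝ (fderiv ℝ g) p :=
    ((hg.fderiv_right (m := (⊤ : ℕ∞)) (by simp)).differentiable (by simp)) p
  have h := ((ContinuousLinearMap.apply ℝ F v).hasFDerivAt.comp p hd.hasFDerivAt).fderiv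
  have e : (fun q => fderiv ℝ g q v) = (ContinuousLinearMap.apply ℝ F v) ∘ fderiv ℝ g := rfl
  rw [e, h]
  simp

lemma D2_symm {g : ℝ × E' → F} (hg : ContDiff ℝ (⊤ : ℕ∞) g) (p v w : ℝ × E') :
    fderiv ℝ (fderiv ℝ g) p v w = fderiv ℝ (fderiv ℝ g) p w v :=
  second_derivative_symmetric (fun y => (hg.differentiable (by simp) y).hasFDerivAt)
    (((hg.fderiv_right (m := (⊤ : ℕ∞)) (by simp)).differentiable (by simp) p).hasFDerivAt) v w

lemma fderiv_coord {g : ℝ × E' → E'} {p : ℝ × E'} (hg : DifferentiableAt ℝ g p) (i : Fin n)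
    (v : ℝ × E') :
    fderiv ℝ (fun q => g q i) p v = fderiv ℝ g p v i := by
  have h := ((EuclideanSpace.proj (𝕜 := ℝ) i).hasFDerivAt.comp p hg.hasFDerivAt).fderiv
  have e : (fun q => g q i) = (EuclideanSpace.proj (𝕜 := ℝ) i) ∘ g := rfl
  rw [e, h]; rfl

lemma contDiff_coord {g : ℝ × E' → E'} (hg : ContDiff ℝ (⊤ : ℕ∞) g) (i : Fin n) :
    ContDiff ℝ (⊤ : ℕ∞) fun q => g q i :=
  (EuclideanSpace.proj (𝕜 := ℝ) i).contDiff.comp hg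

lemma fderiv_fderiv_apply_coord {g : ℝ × E' → E'} (hg : ContDiff ℝ (⊤ : ℕ∞) g)
    (p v w : ℝ × E') (i : Fin n) :
    fderiv ℝ (fun q => fderiv ℝ g q v i) p w = fderiv ℝ (fderiv ℝ g) p w v i := by
  have h1 : (fun q => fderiv ℝ g q v i) = fun q => (fun q' => fderiv ℝ g q' v) q i := rfl
  rw [h1, fderiv_coord ((contDiff_fderiv_apply hg v).differentiable (by simp) p) i w,
    fderiv_fderiv_apply hg p v w]

lemma fderiv_smul_apply {ρ : ℝ × E' → ℝ} {η : ℝ × E' → F} {q : ℝ × E'}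
    (hρ : DifferentiableAt ℝ ρ q) (hη : DifferentiableAt ℝ η q) (v : ℝ × E') :
    fderiv ℝ (fun q' => ρ q' • η q') q v = fderiv ℝ ρ q v • η q + ρ q • fderiv ℝ η q v := by
  rw [fderiv_fun_smul hρ hη]
  simp only [ContinuousLinearMap.add_apply, ContinuousLinearMap.coe_smul', Pi.smul_apply,
    ContinuousLinearMap.smulRight_apply]
  abel

lemma fderiv_smul_apply_coord {ρ : ℝ × E' → ℝ} {η : ℝ × E' → E'} {q : ℝ × E'}
    (hρ : DifferentiableAt ℝ ρ q) (hη : DifferentiableAt ℝ η q) (v : ℝ × E') (i : Fin n) :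
    fderiv ℝ (fun q' => ρ q' • η q') q v i
      = fderiv ℝ ρ q v * η q i + ρ q * fderiv ℝ η q v i := by
  rw [fderiv_smul_apply hρ hη v]
  simp [PiLp.add_apply, PiLp.smul_apply]

lemma D2_smul {ρ : ℝ × E' → ℝ} {η : ℝ × E' → F} (hρ : ContDiff ℝ (⊤ : ℕ∞) ρ) (hη : ContDiff ℝ (⊤ : ℕ∞) η)
    (p v w : ℝ × E') :
    fderiv ℝ (fderiv ℝ (fun q => ρ q • η q)) p v w
      = fderiv ℝ (fderiv ℝ ρ) p v w • η p + fderiv ℝ ρ p w • fderiv ℝ η p v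
        + fderiv ℝ ρ p v • fderiv ℝ η p w + ρ p • fderiv ℝ (fderiv ℝ η) p v w := by
  have hm : ContDiff ℝ (⊤ : ℕ∞) fun q => ρ q • η q := hρ.smul hη
  rw [← fderiv_fderiv_apply hm p w v]
  have hfun : (fun q => fderiv ℝ (fun q' => ρ q' • η q') q w)
      = fun q => fderiv ℝ ρ q w • η q + ρ q • fderiv ℝ η q w := by
    funext q
    exact fderiv_smul_apply (hρ.differentiable (by simp) q) (hη.differentiable (by simp) q) w
  rw [hfun]
  have ha : ContDiff ℝ (⊤ : ℕ∞) fun q => fderiv ℝ ρ q w := contDiff_fderiv_apply hρ w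
  have hb : ContDiff ℝ (⊤ : ℕ∞) fun q => fderiv ℝ η q w := contDiff_fderiv_apply hη w
  rw [fderiv_fun_add (f := fun q => fderiv ℝ ρ q w • η q) (g := fun q => ρ q • fderiv ℝ η q w)
    (((ha.smul hη).differentiable (by simp)) p) (((hρ.smul hb).differentiable (by simp)) p)]
  rw [ContinuousLinearMap.add_apply]
  rw [fderiv_smul_apply ((ha.differentiable (by simp)) p) ((hη.differentiable (by simp)) p)]
  rw [fderiv_smul_apply ((hρ.differentiable (by simp)) p) ((hb.differentiable (by simp)) p)]
  rw [fderiv_fderiv_apply hρ p w v, fderiv_fderiv_apply hη p w v]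
  module

lemma D2_smul_coord {ρ : ℝ × E' → ℝ} {η : ℝ × E' → E'} (hρ : ContDiff ℝ (⊤ : ℕ∞) ρ)
    (hη : ContDiff ℝ (⊤ : ℕ∞) η) (p v w : ℝ × E') (i : Fin n) :
    fderiv ℝ (fderiv ℝ (fun q => ρ q • η q)) p v w i
      = fderiv ℝ (fderiv ℝ ρ) p v w * η p i + fderiv ℝ ρ p w * fderiv ℝ η p v i
        + fderiv ℝ ρ p v * fderiv ℝ η p w i + ρ p * fderiv ℝ (fderiv ℝ η) p v w i := by
  rw [D2_smul hρ hη p v w]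
  simp [PiLp.add_apply, PiLp.smul_apply]

lemma sum_coord (z : Fin n → E') (i : Fin n) : (∑ j, z j) i = ∑ j, z j i :=
  map_sum (EuclideanSpace.proj (𝕜 := ℝ) i) z Finset.univ

end ErtelAux

lemma ertel_algebra {n : ℕ} (ρp rT : ℝ) (U h r rrT Bt : Fin n → ℝ)
    (rr A B BtX : Fin n → Fin n → ℝ) (AA BB : Fin n → Fin n → Fin n → ℝ)
    (hrr : ∀ i j, rr i j = rr j i)
    (hAA : ∀ c i j, AA c i j = AA c j i)
    (hBB : ∀ c i j, BB c i j = BB c j i)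
    (H1 : rT + ∑ j, (r j * U j + ρp * A j j) = 0)
    (H2 : ∀ i, rrT i + ∑ j, (rr i j * U j + r j * A j i + r i * A j j + ρp * AA j i j) = 0)
    (H3 : ∀ i, Bt i + ∑ j, (U j * B i j - h j * A i j) = 0)
    (H4 : ∀ c i, BtX c i + ∑ j, (U j * BB c i j + A j i * B c j - h j * AA c i j - B j i * A c j) = 0) :
    ∑ i, (rrT i * h i + rT * B i i + r i * Bt i + ρp * BtX i i)
      + ∑ i, ((∑ j, (rr i j * h j + r i * B j j + r j * B j i + ρp * BB j i j)) * U i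
          + (∑ j, (r j * h j + ρp * B j j)) * A i i) = 0 := by
  have e1 : rT = ∑ j, -(r j * U j + ρp * A j j) := by
    rw [Finset.sum_neg_distrib]; linarith
  have e2 : ∀ i, rrT i = ∑ j, -(rr i j * U j + r j * A j i + r i * A j j + ρp * AA j i j) := by
    intro i; rw [Finset.sum_neg_distrib]; linarith [H2 i]
  have e3 : ∀ i, Bt i = ∑ j, -(U j * B i j - h j * A i j) := by
    intro i; rw [Finset.sum_neg_distrib]; linarith [H3 i]
  have e4 : ∀ c i, BtX c i
      = ∑ j, -(U j * BB c i j + A j i * B c j - h j * AA c i j - B j i * A c j) := by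
    intro c i; rw [Finset.sum_neg_distrib]; linarith [H4 c i]
  set T : Fin n → Fin n → ℝ := fun i j =>
      -(rr i j * U j + r j * A j i + r i * A j j + ρp * AA j i j) * h i
      + -(r j * U j + ρp * A j j) * B i i
      + r i * -(U j * B i j - h j * A i j)
      + ρp * -(U j * BB i i j + A j i * B i j - h j * AA i i j - B j i * A i j)
      + (rr i j * h j + r i * B j j + r j * B j i + ρp * BB j i j) * U i
      + (r j * h j + ρp * B j j) * A i i with hT
  have key : ∀ i j, T i j + T j i = 0 := by
    intro i j
    simp only [hT]
    linear_combination (h j * U i - U j * h i) * hrr i j + (-(ρp * h i)) * hAA j i j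
      + (ρp * h j) * hAA i i j + (ρp * U i) * hBB j i j + (-(ρp * U j)) * hBB i i j
  have main : ∑ i, ∑ j, T i j = 0 := by
    have hc : ∑ i, ∑ j, T i j = ∑ i, ∑ j, T j i := Finset.sum_comm
    have h2 : (∑ i, ∑ j, T i j) + (∑ i, ∑ j, T i j) = 0 := by
      nth_rewrite 2 [hc]
      rw [← Finset.sum_add_distrib]
      simp only [← Finset.sum_add_distrib]
      simp [key]
    linarith
  calc ∑ i, (rrT i * h i + rT * B i i + r i * Bt i + ρp * BtX i i)
      + ∑ i, ((∑ j, (rr i j * h j + r i * B j j + r j * B j i + ρp * BB j i j)) * U i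
          + (∑ j, (r j * h j + ρp * B j j)) * A i i)
      = ∑ i, ∑ j, T i j := by
        rw [← Finset.sum_add_distrib]
        refine Finset.sum_congr rfl fun i _ => ?_
        rw [e1, e2 i, e3 i, e4 i i]
        simp only [hT, Finset.sum_mul, Finset.mul_sum, ← Finset.sum_add_distrib]
        refine Finset.sum_congr rfl fun j _ => by ring
    _ = 0 := main

/-- Ertel theorem, density case (Theorem 2.3): if `ρ` satisfies the continuity equation and
`η` the relabelling-symmetry equation, then `σ = div(ρη)` satisfies `∂ₜσ + div(σu) = 0`. -/
theorem ertel_density {n : ℕ} (hn : 1 ≤ n)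
    (u η : ℝ × EuclideanSpace ℝ (Fin n) → EuclideanSpace ℝ (Fin n))
    (ρ : ℝ × EuclideanSpace ℝ (Fin n) → ℝ)
    (hu : ContDiff ℝ (⊤ : ℕ∞) u) (hη : ContDiff ℝ (⊤ : ℕ∞) η) (hρ : ContDiff ℝ (⊤ : ℕ∞) ρ)
    (hcont : ∀ (t : ℝ) (x : EuclideanSpace ℝ (Fin n)),
      dt ρ t x + dive (fun q => ρ q • u q) t x = 0)
    (hsym : ∀ (t : ℝ) (x : EuclideanSpace ℝ (Fin n)), dt η t x + bracket u η t x = 0) :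
    ∀ (t : ℝ) (x : EuclideanSpace ℝ (Fin n)),
      dt (fun p => dive (fun q => ρ q • η q) p.1 p.2) t x
        + dive (fun p => dive (fun q => ρ q • η q) p.1 p.2 • u p) t x = 0 := by
  intro t x
  classical
  have hud : Differentiable ℝ u := hu.differentiable (by simp)
  have hηd : Differentiable ℝ η := hη.differentiable (by simp)
  have hρd : Differentiable ℝ ρ := hρ.differentiable (by simp)
  have hm : ContDiff ℝ (⊤ : ℕ∞) fun q => ρ q • η q := hρ.smul hη
  have hmd : Differentiable ℝ fun q => ρ q • η q := hm.differentiable (by simp)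
  -- rewrite the inner divergence as a sum of second–derivative coordinates
  have hσrepr : ∀ q : ℝ × EuclideanSpace ℝ (Fin n),
      dive (fun q' => ρ q' • η q') q.1 q.2
        = ∑ i, fderiv ℝ (fun q' => ρ q' • η q') q (Xv n i) i := by
    intro q
    rw [dive_eq _ q.1 q.2 (by simpa using hmd (q.1, q.2))]
  simp only [hσrepr]
  have hσc : ContDiff ℝ (⊤ : ℕ∞) fun q : ℝ × EuclideanSpace ℝ (Fin n) =>
      ∑ i, fderiv ℝ (fun q' => ρ q' • η q') q (Xv n i) i :=
    ContDiff.sum fun i _ => contDiff_coord (contDiff_fderiv_apply hm (Xv n i)) i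
  rw [dt_eq _ t x (hσc.differentiable (by simp) (t, x)),
      dive_eq (fun p => (∑ i, fderiv ℝ (fun q' => ρ q' • η q') p (Xv n i) i) • u p) t x
        (((hσc.smul hu).differentiable (by simp)) (t, x))]
  have hσ' : ∀ v : ℝ × EuclideanSpace ℝ (Fin n),
      fderiv ℝ (fun q => ∑ i, fderiv ℝ (fun q' => ρ q' • η q') q (Xv n i) i) (t, x) v
        = ∑ i, fderiv ℝ (fderiv ℝ (fun q' => ρ q' • η q')) (t, x) v (Xv n i) i := by
    intro v
    rw [fderiv_fun_sum fun i _ =>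
      ((contDiff_coord (contDiff_fderiv_apply hm (Xv n i)) i).differentiable (by simp)) (t, x)]
    rw [ContinuousLinearMap.sum_apply]
    exact Finset.sum_congr rfl fun i _ => fderiv_fderiv_apply_coord hm (t, x) (Xv n i) v i
  have hB : ∀ i : Fin n,
      fderiv ℝ (fun q => (∑ j, fderiv ℝ (fun q' => ρ q' • η q') q (Xv n j) j) • u q)
          (t, x) (Xv n i) i
        = (∑ j, fderiv ℝ (fderiv ℝ (fun q' => ρ q' • η q')) (t, x) (Xv n i) (Xv n j) j)
              * u (t, x) i
          + (∑ j, fderiv ℝ (fun q' => ρ q' • η q') (t, x) (Xv n j) j)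
              * fderiv ℝ u (t, x) (Xv n i) i := by
    intro i
    rw [fderiv_smul_apply_coord (hσc.differentiable (by simp) (t, x)) (hud (t, x)) (Xv n i) i]
    rw [hσ' (Xv n i)]
  rw [hσ' (Tv n)]
  simp only [hB]
  simp only [D2_smul_coord hρ hη (t, x), fderiv_smul_apply_coord (hρd (t, x)) (hηd (t, x))]
  -- the continuity equation, in coordinates
  have H1 : fderiv ℝ ρ (t, x) (Tv n)
      + ∑ j, (fderiv ℝ ρ (t, x) (Xv n j) * u (t, x) j
          + ρ (t, x) * fderiv ℝ u (t, x) (Xv n j) j) = 0 := by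
    have h0 := hcont t x
    rw [dt_eq ρ t x (hρd (t, x)),
      dive_eq (fun q => ρ q • u q) t x (((hρ.smul hu).differentiable (by simp)) (t, x))] at h0
    simpa only [fderiv_smul_apply_coord (hρd (t, x)) (hud (t, x))] using h0
  -- the continuity equation holds identically, so we may differentiate it
  have hcont' : (fun q : ℝ × EuclideanSpace ℝ (Fin n) => fderiv ℝ ρ q (Tv n)
      + ∑ j, (fderiv ℝ ρ q (Xv n j) * u q j + ρ q * fderiv ℝ u q (Xv n j) j))
      = fun _ => 0 := by
    funext q
    have h0 := hcont q.1 q.2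
    rw [dt_eq ρ q.1 q.2 (by simpa using hρd (q.1, q.2)),
      dive_eq (fun q => ρ q • u q) q.1 q.2 ((hρd _).smul (hud _))] at h0
    simp only [Prod.mk.eta] at h0
    simpa only [fderiv_smul_apply_coord (hρd q) (hud q)] using h0
  have H2 : ∀ i : Fin n, fderiv ℝ (fderiv ℝ ρ) (t, x) (Tv n) (Xv n i)
      + ∑ j, (fderiv ℝ (fderiv ℝ ρ) (t, x) (Xv n i) (Xv n j) * u (t, x) j
          + fderiv ℝ ρ (t, x) (Xv n j) * fderiv ℝ u (t, x) (Xv n i) j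
          + fderiv ℝ ρ (t, x) (Xv n i) * fderiv ℝ u (t, x) (Xv n j) j
          + ρ (t, x) * fderiv ℝ (fderiv ℝ u) (t, x) (Xv n i) (Xv n j) j) = 0 := by
    intro i
    have d1 : ContDiff ℝ (⊤ : ℕ∞) fun q : ℝ × EuclideanSpace ℝ (Fin n) => fderiv ℝ ρ q (Tv n) :=
      contDiff_fderiv_apply hρ (Tv n)
    have d2 : ∀ j : Fin n, ContDiff ℝ (⊤ : ℕ∞) fun q : ℝ × EuclideanSpace ℝ (Fin n) =>
        fderiv ℝ ρ q (Xv n j) * u q j + ρ q * fderiv ℝ u q (Xv n j) j := fun j =>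
      ((contDiff_fderiv_apply hρ (Xv n j)).mul (contDiff_coord hu j)).add
        (hρ.mul (contDiff_coord (contDiff_fderiv_apply hu (Xv n j)) j))
    have hzero : fderiv ℝ (fun q : ℝ × EuclideanSpace ℝ (Fin n) => fderiv ℝ ρ q (Tv n)
        + ∑ j, (fderiv ℝ ρ q (Xv n j) * u q j + ρ q * fderiv ℝ u q (Xv n j) j))
        (t, x) (Xv n i) = 0 := by
      rw [hcont']
      simp
    rw [fderiv_fun_add (d1.differentiable (by simp) (t, x))
        ((ContDiff.sum fun j _ => d2 j).differentiable (by simp) (t, x))] at hzero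
    rw [ContinuousLinearMap.add_apply] at hzero
    rw [fderiv_fun_sum (fun j _ => (d2 j).differentiable (by simp) (t, x))] at hzero
    rw [ContinuousLinearMap.sum_apply] at hzero
    rw [fderiv_fderiv_apply hρ (t, x) (Tv n) (Xv n i)] at hzero
    rw [D2_symm hρ (t, x) (Xv n i) (Tv n)] at hzero
    have hj : ∀ j : Fin n, fderiv ℝ (fun q : ℝ × EuclideanSpace ℝ (Fin n) =>
        fderiv ℝ ρ q (Xv n j) * u q j + ρ q * fderiv ℝ u q (Xv n j) j) (t, x) (Xv n i)
        = fderiv ℝ (fderiv ℝ ρ) (t, x) (Xv n i) (Xv n j) * u (t, x) j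
          + fderiv ℝ ρ (t, x) (Xv n j) * fderiv ℝ u (t, x) (Xv n i) j
          + fderiv ℝ ρ (t, x) (Xv n i) * fderiv ℝ u (t, x) (Xv n j) j
          + ρ (t, x) * fderiv ℝ (fderiv ℝ u) (t, x) (Xv n i) (Xv n j) j := by
      intro j
      rw [fderiv_fun_add
          (((contDiff_fderiv_apply hρ (Xv n j)).mul (contDiff_coord hu j)).differentiable
            (by simp) (t, x))
          ((hρ.mul (contDiff_coord (contDiff_fderiv_apply hu (Xv n j)) j)).differentiable
            (by simp) (t, x)),
        ContinuousLinearMap.add_apply,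
        fderiv_fun_mul ((contDiff_fderiv_apply hρ (Xv n j)).differentiable (by simp) (t, x))
          ((contDiff_coord hu j).differentiable (by simp) (t, x)),
        fderiv_fun_mul (hρd (t, x))
          ((contDiff_coord (contDiff_fderiv_apply hu (Xv n j)) j).differentiable (by simp) (t, x))]
      simp only [ContinuousLinearMap.add_apply, ContinuousLinearMap.coe_smul', Pi.smul_apply,
        smul_eq_mul]
      rw [fderiv_fderiv_apply hρ (t, x) (Xv n j) (Xv n i),
        fderiv_coord (hud (t, x)) j (Xv n i),
        fderiv_fderiv_apply_coord hu (t, x) (Xv n j) (Xv n i) j]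
      ring
    rw [Finset.sum_congr rfl fun j _ => hj j] at hzero
    exact hzero
  -- the symmetry equation, in coordinates
  have H3 : ∀ i : Fin n, fderiv ℝ η (t, x) (Tv n) i
      + ∑ j, (u (t, x) j * fderiv ℝ η (t, x) (Xv n j) i
        - η (t, x) j * fderiv ℝ u (t, x) (Xv n j) i) = 0 := by
    intro i
    have h0 := hsym t x
    rw [bracket] at h0
    rw [dt_eq η t x (hηd (t, x)), Dx_apply η t x (hηd (t, x)) (u (t, x)),
      Dx_apply u t x (hud (t, x)) (η (t, x))] at h0
    rw [pair_decomp (fderiv ℝ η (t, x)) (u (t, x)),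
      pair_decomp (fderiv ℝ u (t, x)) (η (t, x))] at h0
    have h1 := congrArg (fun z : EuclideanSpace ℝ (Fin n) => z i) h0
    simp only [PiLp.add_apply, PiLp.sub_apply, PiLp.zero_apply, sum_coord, PiLp.smul_apply,
      smul_eq_mul] at h1
    rw [← Finset.sum_sub_distrib] at h1
    exact h1
  -- the symmetry equation holds identically, so we may differentiate it
  have hsym' : (fun q : ℝ × EuclideanSpace ℝ (Fin n) => fderiv ℝ η q (Tv n)
      + (fderiv ℝ η q ((0 : ℝ), u q) - fderiv ℝ u q ((0 : ℝ), η q))) = fun _ => 0 := by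
    funext q
    have h0 := hsym q.1 q.2
    rw [bracket] at h0
    rw [dt_eq η q.1 q.2 (by simpa using hηd (q.1, q.2)),
      Dx_apply η q.1 q.2 (by simpa using hηd (q.1, q.2)) (u (q.1, q.2)),
      Dx_apply u q.1 q.2 (by simpa using hud (q.1, q.2)) (η (q.1, q.2))] at h0
    simpa only [Prod.mk.eta] using h0
  have H4 : ∀ c i : Fin n, fderiv ℝ (fderiv ℝ η) (t, x) (Tv n) (Xv n i) c
      + ∑ j, (u (t, x) j * fderiv ℝ (fderiv ℝ η) (t, x) (Xv n i) (Xv n j) c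
          + fderiv ℝ u (t, x) (Xv n i) j * fderiv ℝ η (t, x) (Xv n j) c
          - η (t, x) j * fderiv ℝ (fderiv ℝ u) (t, x) (Xv n i) (Xv n j) c
          - fderiv ℝ η (t, x) (Xv n i) j * fderiv ℝ u (t, x) (Xv n j) c) = 0 := by
    intro c i
    have dηA : ContDiff ℝ (⊤ : ℕ∞) fun q : ℝ × EuclideanSpace ℝ (Fin n) => fderiv ℝ η q (Tv n) :=
      contDiff_fderiv_apply hη (Tv n)
    have hz_u : HasFDerivAt (fun q : ℝ × EuclideanSpace ℝ (Fin n) => ((0 : ℝ), u q))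
        ((0 : (ℝ × EuclideanSpace ℝ (Fin n)) →L[ℝ] ℝ).prod (fderiv ℝ u (t, x))) (t, x) :=
      HasFDerivAt.prodMk (hasFDerivAt_const (0 : ℝ) (t, x)) (hud (t, x)).hasFDerivAt
    have hz_η : HasFDerivAt (fun q : ℝ × EuclideanSpace ℝ (Fin n) => ((0 : ℝ), η q))
        ((0 : (ℝ × EuclideanSpace ℝ (Fin n)) →L[ℝ] ℝ).prod (fderiv ℝ η (t, x))) (t, x) :=
      HasFDerivAt.prodMk (hasFDerivAt_const (0 : ℝ) (t, x)) (hηd (t, x)).hasFDerivAt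
    have dfη : DifferentiableAt ℝ (fderiv ℝ η) (t, x) :=
      (hη.fderiv_right (m := (⊤ : ℕ∞)) (by simp)).differentiable (by simp) (t, x)
    have dfu : DifferentiableAt ℝ (fderiv ℝ u) (t, x) :=
      (hu.fderiv_right (m := (⊤ : ℕ∞)) (by simp)).differentiable (by simp) (t, x)
    have dB : DifferentiableAt ℝ
        (fun q : ℝ × EuclideanSpace ℝ (Fin n) => fderiv ℝ η q ((0 : ℝ), u q)) (t, x) :=
      dfη.clm_apply hz_u.differentiableAt
    have dC : DifferentiableAt ℝ
        (fun q : ℝ × EuclideanSpace ℝ (Fin n) => fderiv ℝ u q ((0 : ℝ), η q)) (t, x) :=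
      dfu.clm_apply hz_η.differentiableAt
    have hzero : fderiv ℝ (fun q : ℝ × EuclideanSpace ℝ (Fin n) => fderiv ℝ η q (Tv n)
        + (fderiv ℝ η q ((0 : ℝ), u q) - fderiv ℝ u q ((0 : ℝ), η q))) (t, x) (Xv n i) = 0 := by
      rw [hsym']
      simp
    rw [fderiv_fun_add (g := fun q => fderiv ℝ η q ((0 : ℝ), u q) - fderiv ℝ u q ((0 : ℝ), η q))
        (dηA.differentiable (by simp) (t, x)) (dB.sub dC),
      ContinuousLinearMap.add_apply,
      fderiv_fun_sub dB dC, ContinuousLinearMap.sub_apply] at hzero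
    rw [fderiv_fderiv_apply hη (t, x) (Tv n) (Xv n i),
      D2_symm hη (t, x) (Xv n i) (Tv n)] at hzero
    rw [fderiv_clm_apply dfη hz_u.differentiableAt,
      fderiv_clm_apply dfu hz_η.differentiableAt] at hzero
    rw [hz_u.fderiv, hz_η.fderiv] at hzero
    simp only [ContinuousLinearMap.add_apply, ContinuousLinearMap.flip_apply,
      ContinuousLinearMap.coe_comp', Function.comp_apply, ContinuousLinearMap.prod_apply,
      ContinuousLinearMap.zero_apply] at hzero
    rw [pair_decomp (fderiv ℝ (fderiv ℝ η) (t, x) (Xv n i)) (u (t, x)),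
      pair_decomp (fderiv ℝ η (t, x)) (fderiv ℝ u (t, x) (Xv n i)),
      pair_decomp (fderiv ℝ (fderiv ℝ u) (t, x) (Xv n i)) (η (t, x)),
      pair_decomp (fderiv ℝ u (t, x)) (fderiv ℝ η (t, x) (Xv n i))] at hzero
    have h1 := congrArg (fun z : EuclideanSpace ℝ (Fin n) => z c) hzero
    simp only [PiLp.add_apply, PiLp.sub_apply, PiLp.zero_apply, sum_coord, PiLp.smul_apply,
      smul_eq_mul] at h1
    simp only [Finset.sum_sub_distrib, Finset.sum_add_distrib]
    linarith [h1]
  have hrr : ∀ i j : Fin n, fderiv ℝ (fderiv ℝ ρ) (t, x) (Xv n i) (Xv n j)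
      = fderiv ℝ (fderiv ℝ ρ) (t, x) (Xv n j) (Xv n i) := fun i j =>
    D2_symm hρ (t, x) (Xv n i) (Xv n j)
  have hAA : ∀ c i j : Fin n, fderiv ℝ (fderiv ℝ u) (t, x) (Xv n i) (Xv n j) c
      = fderiv ℝ (fderiv ℝ u) (t, x) (Xv n j) (Xv n i) c := fun c i j =>
    congrArg (fun z : EuclideanSpace ℝ (Fin n) => z c) (D2_symm hu (t, x) (Xv n i) (Xv n j))
  have hBB : ∀ c i j : Fin n, fderiv ℝ (fderiv ℝ η) (t, x) (Xv n i) (Xv n j) c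
      = fderiv ℝ (fderiv ℝ η) (t, x) (Xv n j) (Xv n i) c := fun c i j =>
    congrArg (fun z : EuclideanSpace ℝ (Fin n) => z c) (D2_symm hη (t, x) (Xv n i) (Xv n j))
  have final := ertel_algebra (n := n) (ρ (t, x)) (fderiv ℝ ρ (t, x) (Tv n))
    (fun i => u (t, x) i) (fun i => η (t, x) i)
    (fun i => fderiv ℝ ρ (t, x) (Xv n i))
    (fun i => fderiv ℝ (fderiv ℝ ρ) (t, x) (Tv n) (Xv n i))
    (fun i => fderiv ℝ η (t, x) (Tv n) i)
    (fun i j => fderiv ℝ (fderiv ℝ ρ) (t, x) (Xv n i) (Xv n j))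
    (fun c a => fderiv ℝ u (t, x) (Xv n a) c)
    (fun c a => fderiv ℝ η (t, x) (Xv n a) c)
    (fun c a => fderiv ℝ (fderiv ℝ η) (t, x) (Tv n) (Xv n a) c)
    (fun c a b => fderiv ℝ (fderiv ℝ u) (t, x) (Xv n a) (Xv n b) c)
    (fun c a b => fderiv ℝ (fderiv ℝ η) (t, x) (Xv n a) (Xv n b) c)
    hrr hAA hBB H1 H2 H3 H4
  beta_reduce at final
  refine Eq.trans ?_ final
  congr 1
  · exact Finset.sum_congr rfl fun i _ => by ring
  · refine Finset.sum_congr rfl fun i _ => ?_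
    have hswap :
      (∑ j, (fderiv ℝ (fderiv ℝ ρ) (t, x) (Xv n i) (Xv n j) * η (t, x) j
        + fderiv ℝ ρ (t, x) (Xv n j) * fderiv ℝ η (t, x) (Xv n i) j
        + fderiv ℝ ρ (t, x) (Xv n i) * fderiv ℝ η (t, x) (Xv n j) j
        + ρ (t, x) * fderiv ℝ (fderiv ℝ η) (t, x) (Xv n i) (Xv n j) j))
      = ∑ j, (fderiv ℝ (fderiv ℝ ρ) (t, x) (Xv n i) (Xv n j) * η (t, x) j
        + fderiv ℝ ρ (t, x) (Xv n i) * fderiv ℝ η (t, x) (Xv n j) j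
        + fderiv ℝ ρ (t, x) (Xv n j) * fderiv ℝ η (t, x) (Xv n i) j
        + ρ (t, x) * fderiv ℝ (fderiv ℝ η) (t, x) (Xv n i) (Xv n j) j) :=
      Finset.sum_congr rfl fun j _ => by ring
    rw [hswap]
end
end

section
/- Local conservation of Ertel potential vorticity (equations (pv-def), (pv-advect)): Let u, v : ℝ × E → E and b, s : ℝ × E → ℝ be smooth, where E = EuclideanSpace ℝ (Fin 3). Assume v satisfies the Kelvin equation ∂t v + D_x v(u) + (D_x u)ᵀ v = ∇b everywhere, and s is advected: ∂t s + D_x s(u) = 0 everywhere. Then the potential vorticity density q := ⟪curl v, ∇s⟫ satisfies the local conservation law ∂t q + div(q·u) = 0 everywhere. -/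
open scoped RealInnerProductSpace
open MeasureTheory
noncomputable section

/-- Curl of a time-dependent vector field on `EuclideanSpace ℝ (Fin 3)` (0-indexed components). -/
def curl (w : ℝ × EuclideanSpace ℝ (Fin 3) → EuclideanSpace ℝ (Fin 3)) (t : ℝ)
    (x : EuclideanSpace ℝ (Fin 3)) : EuclideanSpace ℝ (Fin 3) :=
  (WithLp.equiv 2 (Fin 3 → ℝ)).symm
    ![Dx w t x (EuclideanSpace.single 1 1) 2 - Dx w t x (EuclideanSpace.single 2 1) 1,
      Dx w t x (EuclideanSpace.single 2 1) 0 - Dx w t x (EuclideanSpace.single 0 1) 2,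
      Dx w t x (EuclideanSpace.single 0 1) 1 - Dx w t x (EuclideanSpace.single 1 1) 0]

/-- Cross product on `EuclideanSpace ℝ (Fin 3)`. -/
def cross (a b : EuclideanSpace ℝ (Fin 3)) : EuclideanSpace ℝ (Fin 3) :=
  (WithLp.equiv 2 (Fin 3 → ℝ)).symm
    ![a 1 * b 2 - a 2 * b 1, a 2 * b 0 - a 0 * b 2, a 0 * b 1 - a 1 * b 0]


/-! ### Auxiliary machinery for the proof -/

abbrev E3 := EuclideanSpace ℝ (Fin 3)
abbrev P3 := ℝ × E3

/-- Directional derivative of a scalar field on `ℝ × E3`. -/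
def pd (d : P3) (f : P3 → ℝ) : P3 → ℝ := fun p => fderiv ℝ f p d

/-- Component of a vector field. -/
def cw (w : P3 → E3) (m : Fin 3) : P3 → ℝ := fun p => w p m

@[fun_prop]
theorem pd_smooth {f : P3 → ℝ} (hf : ContDiff ℝ (⊤ : ℕ∞) f) (d : P3) : ContDiff ℝ (⊤ : ℕ∞) (pd d f) :=
  (hf.fderiv_right (by simp)).clm_apply contDiff_const

@[fun_prop]
theorem cw_smooth {w : P3 → E3} (hw : ContDiff ℝ (⊤ : ℕ∞) w) (m : Fin 3) : ContDiff ℝ (⊤ : ℕ∞) (cw w m) :=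
  (EuclideanSpace.proj (𝕜 := ℝ) m).contDiff.comp hw

theorem pd_comm {f : P3 → ℝ} (hf : ContDiff ℝ (⊤ : ℕ∞) f) (d₁ d₂ : P3) (p : P3) :
    pd d₁ (pd d₂ f) p = pd d₂ (pd d₁ f) p := by
  have hdiff : DifferentiableAt ℝ (fderiv ℝ f) p :=
    ((hf.fderiv_right (m := 1) (WithTop.coe_le_coe.mpr le_top)).differentiable one_ne_zero) p
  have key : ∀ d : P3, fderiv ℝ (fun q => fderiv ℝ f q d) p = (fderiv ℝ (fderiv ℝ f) p).flip d := by
    intro d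
    have := fderiv_clm_apply (c := fderiv ℝ f) (u := fun _ => d) hdiff (differentiableAt_const d)
    simpa using this
  have hsymm : IsSymmSndFDerivAt ℝ f p := hf.contDiffAt.isSymmSndFDerivAt (by rw [minSmoothness_of_isRCLikeNormedField]; exact WithTop.coe_le_coe.mpr le_top)
  show fderiv ℝ (fun q => fderiv ℝ f q d₂) p d₁ = fderiv ℝ (fun q => fderiv ℝ f q d₁) p d₂
  rw [key, key]
  exact hsymm d₁ d₂

theorem pd_add {f g : P3 → ℝ} (hf : ContDiff ℝ (⊤ : ℕ∞) f) (hg : ContDiff ℝ (⊤ : ℕ∞) g) (d q : P3) :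
    pd d (fun p => f p + g p) q = pd d f q + pd d g q := by
  show fderiv ℝ _ q d = _
  rw [fderiv_fun_add ((hf.differentiable (by simp)).differentiableAt)
    ((hg.differentiable (by simp)).differentiableAt)]
  rfl

theorem pd_sub {f g : P3 → ℝ} (hf : ContDiff ℝ (⊤ : ℕ∞) f) (hg : ContDiff ℝ (⊤ : ℕ∞) g) (d q : P3) :
    pd d (fun p => f p - g p) q = pd d f q - pd d g q := by
  show fderiv ℝ _ q d = _
  rw [fderiv_fun_sub ((hf.differentiable (by simp)).differentiableAt)
    ((hg.differentiable (by simp)).differentiableAt)]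
  rfl

theorem pd_mul {f g : P3 → ℝ} (hf : ContDiff ℝ (⊤ : ℕ∞) f) (hg : ContDiff ℝ (⊤ : ℕ∞) g) (d q : P3) :
    pd d (fun p => f p * g p) q = pd d f q * g q + f q * pd d g q := by
  show fderiv ℝ _ q d = _
  rw [fderiv_fun_mul ((hf.differentiable (by simp)).differentiableAt)
    ((hg.differentiable (by simp)).differentiableAt)]
  show f q * fderiv ℝ g q d + g q * fderiv ℝ f q d
      = fderiv ℝ f q d * g q + f q * fderiv ℝ g q d
  ring

theorem pd_const (c : ℝ) (d q : P3) : pd d (fun _ => c) q = 0 := by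
  show fderiv ℝ _ q d = 0
  rw [fderiv_fun_const]; rfl

theorem Dx_eq_pd {f : P3 → ℝ} (hf : ContDiff ℝ (⊤ : ℕ∞) f) (t : ℝ) (x : E3) (e : E3) :
    Dx f t x e = pd ((0 : ℝ), e) f ((t, x) : P3) := by
  have hmap : HasFDerivAt (fun y : E3 => ((t, y) : P3))
      (ContinuousLinearMap.prod 0 (ContinuousLinearMap.id ℝ E3)) x :=
    HasFDerivAt.prodMk (hasFDerivAt_const t x) (hasFDerivAt_id x)
  have h := ((hf.differentiable (by simp) (t, x)).hasFDerivAt).comp x hmap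
  have : Dx f t x = (fderiv ℝ f (t, x)).comp
      (ContinuousLinearMap.prod 0 (ContinuousLinearMap.id ℝ E3)) := h.fderiv
  rw [this]; rfl

theorem dt_eq_pd {f : P3 → ℝ} (hf : ContDiff ℝ (⊤ : ℕ∞) f) (t : ℝ) (x : E3) :
    dt f t x = pd ((1 : ℝ), (0 : E3)) f ((t, x) : P3) := by
  have hmap : HasDerivAt (fun τ : ℝ => ((τ, x) : P3)) ((1 : ℝ), (0 : E3)) t :=
    HasDerivAt.prodMk (hasDerivAt_id t) (hasDerivAt_const t x)
  have h := ((hf.differentiable (by simp) (t, x)).hasFDerivAt).comp_hasDerivAt t hmap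
  exact h.deriv

theorem Dx_comp {w : P3 → E3} (hw : ContDiff ℝ (⊤ : ℕ∞) w) (t : ℝ) (x : E3) (e : E3) (m : Fin 3) :
    Dx w t x e m = Dx (cw w m) t x e := by
  have hdiff : DifferentiableAt ℝ (fun y : E3 => w (t, y)) x :=
    ((hw.comp ((contDiff_const (c := t)).prodMk contDiff_id)).differentiable (by simp)) x
  have := ((EuclideanSpace.proj (𝕜 := ℝ) m).hasFDerivAt.comp x hdiff.hasFDerivAt).fderiv
  show (EuclideanSpace.proj (𝕜 := ℝ) m) (fderiv ℝ (fun y => w (t, y)) x e) = _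
  rw [show Dx (cw w m) t x
      = fderiv ℝ ((EuclideanSpace.proj (𝕜 := ℝ) m) ∘ (fun y => w (t, y))) x from rfl, this]
  rfl

theorem dt_comp {w : P3 → E3} (hw : ContDiff ℝ (⊤ : ℕ∞) w) (t : ℝ) (x : E3) (m : Fin 3) :
    dt w t x m = dt (cw w m) t x := by
  have hdiff : DifferentiableAt ℝ (fun τ : ℝ => w (τ, x)) t :=
    ((hw.comp (contDiff_id.prodMk (contDiff_const (c := x)))).differentiable (by simp)) t
  have := ((EuclideanSpace.proj (𝕜 := ℝ) m).hasFDerivAt.comp_hasDerivAt t hdiff.hasDerivAt).deriv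
  show (EuclideanSpace.proj (𝕜 := ℝ) m) (deriv (fun τ => w (τ, x)) t) = _
  rw [show dt (cw w m) t x
      = deriv ((EuclideanSpace.proj (𝕜 := ℝ) m) ∘ (fun τ => w (τ, x))) t from rfl, this]

theorem grad_comp {f : P3 → ℝ} (t : ℝ) (x : E3) (m : Fin 3) :
    grad f t x m = Dx f t x (EuclideanSpace.single m 1) := by
  have h1 : grad f t x m = ⟪grad f t x, EuclideanSpace.single m (1:ℝ)⟫ := by
    rw [EuclideanSpace.inner_single_right]; simp
  rw [h1]
  show ⟪gradient (fun y => f (t, y)) x, _⟫ = _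
  rw [gradient, InnerProductSpace.toDual_symm_apply]
  rfl

theorem dive_eq_s13 (w : P3 → E3) (t : ℝ) (x : E3) :
    dive w t x = ∑ m : Fin 3, Dx w t x (EuclideanSpace.single m 1) m := by
  rw [dive, LinearMap.trace_eq_matrix_trace ℝ (EuclideanSpace.basisFun (Fin 3) ℝ).toBasis]
  simp [Matrix.trace, Matrix.diag, LinearMap.toMatrix_apply, EuclideanSpace.basisFun_repr,
    EuclideanSpace.basisFun_apply]

theorem apply_sum_comp (A : E3 →L[ℝ] E3) (w : E3) (m : Fin 3) :
    A w m = ∑ j : Fin 3, w j * A (EuclideanSpace.single j 1) m := by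
  have hw : w = ∑ j : Fin 3, w j • EuclideanSpace.single j (1:ℝ) := by
    have := (EuclideanSpace.basisFun (Fin 3) ℝ).sum_repr w
    simpa [EuclideanSpace.basisFun_apply, EuclideanSpace.basisFun_repr] using this.symm
  conv_lhs => rw [hw]
  rw [map_sum]
  induction (Finset.univ : Finset (Fin 3)) using Finset.induction with
  | empty => simp
  | insert _ _ h ih =>
    rw [Finset.sum_insert h, Finset.sum_insert h, PiLp.add_apply, ih, _root_.map_smul, PiLp.smul_apply]
    simp

theorem apply_sum_scalar (A : E3 →L[ℝ] ℝ) (w : E3) :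
    A w = ∑ j : Fin 3, w j * A (EuclideanSpace.single j 1) := by
  have hw : w = ∑ j : Fin 3, w j • EuclideanSpace.single j (1:ℝ) := by
    have := (EuclideanSpace.basisFun (Fin 3) ℝ).sum_repr w
    simpa [EuclideanSpace.basisFun_apply, EuclideanSpace.basisFun_repr] using this.symm
  conv_lhs => rw [hw]
  rw [map_sum]
  simp [smul_eq_mul]

theorem adjoint_comp (A : E3 →L[ℝ] E3) (w : E3) (m : Fin 3) :
    ContinuousLinearMap.adjoint A w m = ∑ k : Fin 3, w k * A (EuclideanSpace.single m 1) k := by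
  have h1 : ContinuousLinearMap.adjoint A w m
      = ⟪ContinuousLinearMap.adjoint A w, EuclideanSpace.single m (1:ℝ)⟫ := by
    rw [EuclideanSpace.inner_single_right]; simp
  rw [h1, ContinuousLinearMap.adjoint_inner_left]
  rw [PiLp.inner_apply]
  simp [mul_comm]

theorem inner_expand (a c : E3) : ⟪a, c⟫ = ∑ i : Fin 3, a i * c i := by
  rw [PiLp.inner_apply]; simp [mul_comm]

theorem cw_smul {f : P3 → ℝ} {w : P3 → E3} (m : Fin 3) :
    cw (fun p => f p • w p) m = fun p => f p * cw w m p := rfl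

set_option maxHeartbeats 4000000 in
/-- Local conservation of Ertel potential vorticity (equations (pv-def), (pv-advect)):
if `v` satisfies the Kelvin equation and `s` is advected, then the potential vorticity
`q = ⟪curl v, ∇s⟫` satisfies `∂ₜq + div(q u) = 0`. -/
theorem potential_vorticity_conserved
    (u v : ℝ × EuclideanSpace ℝ (Fin 3) → EuclideanSpace ℝ (Fin 3))
    (b s : ℝ × EuclideanSpace ℝ (Fin 3) → ℝ)
    (hu : ContDiff ℝ (⊤ : ℕ∞) u) (hv : ContDiff ℝ (⊤ : ℕ∞) v) (hb : ContDiff ℝ (⊤ : ℕ∞) b) (hs : ContDiff ℝ (⊤ : ℕ∞) s)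
    (hkelvin : ∀ (t : ℝ) (x : EuclideanSpace ℝ (Fin 3)),
      dt v t x + Dx v t x (u (t, x))
        + ContinuousLinearMap.adjoint (Dx u t x) (v (t, x)) = grad b t x)
    (hadv : ∀ (t : ℝ) (x : EuclideanSpace ℝ (Fin 3)), dt s t x + Dx s t x (u (t, x)) = 0) :
    ∀ (t : ℝ) (x : EuclideanSpace ℝ (Fin 3)),
      dt (fun p => ⟪curl v p.1 p.2, grad s p.1 p.2⟫) t x
        + dive (fun p => ⟪curl v p.1 p.2, grad s p.1 p.2⟫ • u p) t x = 0 := by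
  intro t x
  have hKc0 : ∀ p : P3, pd ((1 : ℝ), (0 : E3)) (cw v 0) p + (cw u 0 p * pd ((0 : ℝ), EuclideanSpace.single (0 : Fin 3) (1 : ℝ)) (cw v 0) p + cw u 1 p * pd ((0 : ℝ), EuclideanSpace.single (1 : Fin 3) (1 : ℝ)) (cw v 0) p + cw u 2 p * pd ((0 : ℝ), EuclideanSpace.single (2 : Fin 3) (1 : ℝ)) (cw v 0) p) + (cw v 0 p * pd ((0 : ℝ), EuclideanSpace.single (0 : Fin 3) (1 : ℝ)) (cw u 0) p + cw v 1 p * pd ((0 : ℝ), EuclideanSpace.single (0 : Fin 3) (1 : ℝ)) (cw u 1) p + cw v 2 p * pd ((0 : ℝ), EuclideanSpace.single (0 : Fin 3) (1 : ℝ)) (cw u 2) p) = pd ((0 : ℝ), EuclideanSpace.single (0 : Fin 3) (1 : ℝ)) b p := by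
    intro p
    have h1 := congrArg (fun z : E3 => z (0 : Fin 3)) (hkelvin p.1 p.2)
    simp only [PiLp.add_apply] at h1
    rw [dt_comp hv, dt_eq_pd (cw_smooth hv 0)] at h1
    rw [apply_sum_comp, adjoint_comp, grad_comp, Dx_eq_pd hb] at h1
    simp only [Fin.sum_univ_three] at h1
    simp only [Dx_comp hu, Dx_comp hv] at h1
    simp only [Dx_eq_pd (cw_smooth hu 0), Dx_eq_pd (cw_smooth hu 1), Dx_eq_pd (cw_smooth hu 2),
      Dx_eq_pd (cw_smooth hv 0), Dx_eq_pd (cw_smooth hv 1), Dx_eq_pd (cw_smooth hv 2)] at h1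
    have e1 : ∀ j : Fin 3, u (p.1, p.2) j = cw u j p := fun _ => rfl
    have e2 : ∀ j : Fin 3, v (p.1, p.2) j = cw v j p := fun _ => rfl
    simp only [e1, e2, Prod.mk.eta] at h1
    linear_combination h1
  have hKc1 : ∀ p : P3, pd ((1 : ℝ), (0 : E3)) (cw v 1) p + (cw u 0 p * pd ((0 : ℝ), EuclideanSpace.single (0 : Fin 3) (1 : ℝ)) (cw v 1) p + cw u 1 p * pd ((0 : ℝ), EuclideanSpace.single (1 : Fin 3) (1 : ℝ)) (cw v 1) p + cw u 2 p * pd ((0 : ℝ), EuclideanSpace.single (2 : Fin 3) (1 : ℝ)) (cw v 1) p) + (cw v 0 p * pd ((0 : ℝ), EuclideanSpace.single (1 : Fin 3) (1 : ℝ)) (cw u 0) p + cw v 1 p * pd ((0 : ℝ), EuclideanSpace.single (1 : Fin 3) (1 : ℝ)) (cw u 1) p + cw v 2 p * pd ((0 : ℝ), EuclideanSpace.single (1 : Fin 3) (1 : ℝ)) (cw u 2) p) = pd ((0 : ℝ), EuclideanSpace.single (1 : Fin 3) (1 : ℝ)) b p := by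
    intro p
    have h1 := congrArg (fun z : E3 => z (1 : Fin 3)) (hkelvin p.1 p.2)
    simp only [PiLp.add_apply] at h1
    rw [dt_comp hv, dt_eq_pd (cw_smooth hv 1)] at h1
    rw [apply_sum_comp, adjoint_comp, grad_comp, Dx_eq_pd hb] at h1
    simp only [Fin.sum_univ_three] at h1
    simp only [Dx_comp hu, Dx_comp hv] at h1
    simp only [Dx_eq_pd (cw_smooth hu 0), Dx_eq_pd (cw_smooth hu 1), Dx_eq_pd (cw_smooth hu 2),
      Dx_eq_pd (cw_smooth hv 0), Dx_eq_pd (cw_smooth hv 1), Dx_eq_pd (cw_smooth hv 2)] at h1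
    have e1 : ∀ j : Fin 3, u (p.1, p.2) j = cw u j p := fun _ => rfl
    have e2 : ∀ j : Fin 3, v (p.1, p.2) j = cw v j p := fun _ => rfl
    simp only [e1, e2, Prod.mk.eta] at h1
    linear_combination h1
  have hKc2 : ∀ p : P3, pd ((1 : ℝ), (0 : E3)) (cw v 2) p + (cw u 0 p * pd ((0 : ℝ), EuclideanSpace.single (0 : Fin 3) (1 : ℝ)) (cw v 2) p + cw u 1 p * pd ((0 : ℝ), EuclideanSpace.single (1 : Fin 3) (1 : ℝ)) (cw v 2) p + cw u 2 p * pd ((0 : ℝ), EuclideanSpace.single (2 : Fin 3) (1 : ℝ)) (cw v 2) p) + (cw v 0 p * pd ((0 : ℝ), EuclideanSpace.single (2 : Fin 3) (1 : ℝ)) (cw u 0) p + cw v 1 p * pd ((0 : ℝ), EuclideanSpace.single (2 : Fin 3) (1 : ℝ)) (cw u 1) p + cw v 2 p * pd ((0 : ℝ), EuclideanSpace.single (2 : Fin 3) (1 : ℝ)) (cw u 2) p) = pd ((0 : ℝ), EuclideanSpace.single (2 : Fin 3) (1 : ℝ)) b p := by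
    intro p
    have h1 := congrArg (fun z : E3 => z (2 : Fin 3)) (hkelvin p.1 p.2)
    simp only [PiLp.add_apply] at h1
    rw [dt_comp hv, dt_eq_pd (cw_smooth hv 2)] at h1
    rw [apply_sum_comp, adjoint_comp, grad_comp, Dx_eq_pd hb] at h1
    simp only [Fin.sum_univ_three] at h1
    simp only [Dx_comp hu, Dx_comp hv] at h1
    simp only [Dx_eq_pd (cw_smooth hu 0), Dx_eq_pd (cw_smooth hu 1), Dx_eq_pd (cw_smooth hu 2),
      Dx_eq_pd (cw_smooth hv 0), Dx_eq_pd (cw_smooth hv 1), Dx_eq_pd (cw_smooth hv 2)] at h1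
    have e1 : ∀ j : Fin 3, u (p.1, p.2) j = cw u j p := fun _ => rfl
    have e2 : ∀ j : Fin 3, v (p.1, p.2) j = cw v j p := fun _ => rfl
    simp only [e1, e2, Prod.mk.eta] at h1
    linear_combination h1
  have hAc : ∀ p : P3, pd ((1 : ℝ), (0 : E3)) s p + (cw u 0 p * pd ((0 : ℝ), EuclideanSpace.single (0 : Fin 3) (1 : ℝ)) s p + cw u 1 p * pd ((0 : ℝ), EuclideanSpace.single (1 : Fin 3) (1 : ℝ)) s p + cw u 2 p * pd ((0 : ℝ), EuclideanSpace.single (2 : Fin 3) (1 : ℝ)) s p) = 0 := by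
    intro p
    have h1 := hadv p.1 p.2
    rw [dt_eq_pd hs, apply_sum_scalar] at h1
    simp only [Fin.sum_univ_three] at h1
    simp only [Dx_eq_pd hs] at h1
    have e1 : ∀ j : Fin 3, u (p.1, p.2) j = cw u j p := fun _ => rfl
    simp only [e1, Prod.mk.eta] at h1
    linear_combination h1
  have hKd00 := congrArg (fun f => pd ((0 : ℝ), EuclideanSpace.single (0 : Fin 3) (1 : ℝ)) f ((t, x) : P3)) (funext hKc0)
  simp (disch := fun_prop) only [pd_add, pd_sub, pd_mul, pd_const] at hKd00
  have hKd01 := congrArg (fun f => pd ((0 : ℝ), EuclideanSpace.single (0 : Fin 3) (1 : ℝ)) f ((t, x) : P3)) (funext hKc1)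
  simp (disch := fun_prop) only [pd_add, pd_sub, pd_mul, pd_const] at hKd01
  have hKd02 := congrArg (fun f => pd ((0 : ℝ), EuclideanSpace.single (0 : Fin 3) (1 : ℝ)) f ((t, x) : P3)) (funext hKc2)
  simp (disch := fun_prop) only [pd_add, pd_sub, pd_mul, pd_const] at hKd02
  have hKd10 := congrArg (fun f => pd ((0 : ℝ), EuclideanSpace.single (1 : Fin 3) (1 : ℝ)) f ((t, x) : P3)) (funext hKc0)
  simp (disch := fun_prop) only [pd_add, pd_sub, pd_mul, pd_const] at hKd10
  have hKd11 := congrArg (fun f => pd ((0 : ℝ), EuclideanSpace.single (1 : Fin 3) (1 : ℝ)) f ((t, x) : P3)) (funext hKc1)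
  simp (disch := fun_prop) only [pd_add, pd_sub, pd_mul, pd_const] at hKd11
  have hKd12 := congrArg (fun f => pd ((0 : ℝ), EuclideanSpace.single (1 : Fin 3) (1 : ℝ)) f ((t, x) : P3)) (funext hKc2)
  simp (disch := fun_prop) only [pd_add, pd_sub, pd_mul, pd_const] at hKd12
  have hKd20 := congrArg (fun f => pd ((0 : ℝ), EuclideanSpace.single (2 : Fin 3) (1 : ℝ)) f ((t, x) : P3)) (funext hKc0)
  simp (disch := fun_prop) only [pd_add, pd_sub, pd_mul, pd_const] at hKd20
  have hKd21 := congrArg (fun f => pd ((0 : ℝ), EuclideanSpace.single (2 : Fin 3) (1 : ℝ)) f ((t, x) : P3)) (funext hKc1)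
  simp (disch := fun_prop) only [pd_add, pd_sub, pd_mul, pd_const] at hKd21
  have hKd22 := congrArg (fun f => pd ((0 : ℝ), EuclideanSpace.single (2 : Fin 3) (1 : ℝ)) f ((t, x) : P3)) (funext hKc2)
  simp (disch := fun_prop) only [pd_add, pd_sub, pd_mul, pd_const] at hKd22
  have hAd0 := congrArg (fun f => pd ((0 : ℝ), EuclideanSpace.single (0 : Fin 3) (1 : ℝ)) f ((t, x) : P3)) (funext hAc)
  simp (disch := fun_prop) only [pd_add, pd_sub, pd_mul, pd_const] at hAd0
  have hAd1 := congrArg (fun f => pd ((0 : ℝ), EuclideanSpace.single (1 : Fin 3) (1 : ℝ)) f ((t, x) : P3)) (funext hAc)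
  simp (disch := fun_prop) only [pd_add, pd_sub, pd_mul, pd_const] at hAd1
  have hAd2 := congrArg (fun f => pd ((0 : ℝ), EuclideanSpace.single (2 : Fin 3) (1 : ℝ)) f ((t, x) : P3)) (funext hAc)
  simp (disch := fun_prop) only [pd_add, pd_sub, pd_mul, pd_const] at hAd2
  have hQp : ∀ p : P3, (inner ℝ (curl v p.1 p.2) (grad s p.1 p.2) : ℝ) = (pd ((0 : ℝ), EuclideanSpace.single (1 : Fin 3) (1 : ℝ)) (cw v 2) p - pd ((0 : ℝ), EuclideanSpace.single (2 : Fin 3) (1 : ℝ)) (cw v 1) p) * pd ((0 : ℝ), EuclideanSpace.single (0 : Fin 3) (1 : ℝ)) s p + (pd ((0 : ℝ), EuclideanSpace.single (2 : Fin 3) (1 : ℝ)) (cw v 0) p - pd ((0 : ℝ), EuclideanSpace.single (0 : Fin 3) (1 : ℝ)) (cw v 2) p) * pd ((0 : ℝ), EuclideanSpace.single (1 : Fin 3) (1 : ℝ)) s p + (pd ((0 : ℝ), EuclideanSpace.single (0 : Fin 3) (1 : ℝ)) (cw v 1) p - pd ((0 : ℝ), EuclideanSpace.single (1 : Fin 3)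 (1 : ℝ)) (cw v 0) p) * pd ((0 : ℝ), EuclideanSpace.single (2 : Fin 3) (1 : ℝ)) s p := by
    intro p
    rw [inner_expand]
    simp only [Fin.sum_univ_three]
    simp only [curl, WithLp.equiv_symm_apply, PiLp.toLp_apply, Matrix.cons_val_zero, Matrix.cons_val_one,
      Matrix.head_cons, Matrix.cons_val_two, Matrix.tail_cons]
    simp only [grad_comp]
    simp only [Dx_comp hv]
    simp only [Dx_eq_pd (cw_smooth hv 0), Dx_eq_pd (cw_smooth hv 1), Dx_eq_pd (cw_smooth hv 2),
      Dx_eq_pd hs, Prod.mk.eta]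
    try ring
  simp only [hQp]
  rw [dive_eq_s13]
  simp only [Fin.sum_univ_three]
  simp (disch := fun_prop) only [dt_eq_pd, Dx_comp, cw_smul, Dx_eq_pd]
  simp (disch := fun_prop) only [pd_add, pd_sub, pd_mul, pd_const]
  linear_combination (norm := ring1)
      ((pd ((0 : ℝ), EuclideanSpace.single (0 : Fin 3) (1 : ℝ)) s ((t, x) : P3))) * hKd12
      + (-(pd ((0 : ℝ), EuclideanSpace.single (0 : Fin 3) (1 : ℝ)) s ((t, x) : P3))) * hKd21
      + (-(pd ((0 : ℝ), EuclideanSpace.single (1 : Fin 3) (1 : ℝ)) s ((t, x) : P3))) * hKd02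
      + ((pd ((0 : ℝ), EuclideanSpace.single (1 : Fin 3) (1 : ℝ)) s ((t, x) : P3))) * hKd20
      + ((pd ((0 : ℝ), EuclideanSpace.single (2 : Fin 3) (1 : ℝ)) s ((t, x) : P3))) * hKd01
      + (-(pd ((0 : ℝ), EuclideanSpace.single (2 : Fin 3) (1 : ℝ)) s ((t, x) : P3))) * hKd10
      + (((pd ((0 : ℝ), EuclideanSpace.single (1 : Fin 3) (1 : ℝ)) (cw v 2) ((t, x) : P3))) - ((pd ((0 : ℝ), EuclideanSpace.single (2 : Fin 3) (1 : ℝ)) (cw v 1) ((t, x) : P3)))) * hAd0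
      + (- ((pd ((0 : ℝ), EuclideanSpace.single (0 : Fin 3) (1 : ℝ)) (cw v 2) ((t, x) : P3))) + ((pd ((0 : ℝ), EuclideanSpace.single (2 : Fin 3) (1 : ℝ)) (cw v 0) ((t, x) : P3)))) * hAd1
      + (((pd ((0 : ℝ), EuclideanSpace.single (0 : Fin 3) (1 : ℝ)) (cw v 1) ((t, x) : P3))) - ((pd ((0 : ℝ), EuclideanSpace.single (1 : Fin 3) (1 : ℝ)) (cw v 0) ((t, x) : P3)))) * hAd2
      + (((pd ((0 : ℝ), EuclideanSpace.single (2 : Fin 3) (1 : ℝ)) s ((t, x) : P3)))) * (pd_comm (cw_smooth hv 1) ((1 : ℝ), (0 : E3)) ((0 : ℝ), EuclideanSpace.single (0 : Fin 3) (1 : ℝ)) ((t, x) : P3))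
      + (- ((pd ((0 : ℝ), EuclideanSpace.single (1 : Fin 3) (1 : ℝ)) s ((t, x) : P3)))) * (pd_comm (cw_smooth hv 2) ((1 : ℝ), (0 : E3)) ((0 : ℝ), EuclideanSpace.single (0 : Fin 3) (1 : ℝ)) ((t, x) : P3))
      + (((pd ((0 : ℝ), EuclideanSpace.single (1 : Fin 3) (1 : ℝ)) (cw v 2) ((t, x) : P3))) - ((pd ((0 : ℝ), EuclideanSpace.single (2 : Fin 3) (1 : ℝ)) (cw v 1) ((t, x) : P3)))) * (pd_comm hs ((1 : ℝ), (0 : E3)) ((0 : ℝ), EuclideanSpace.single (0 : Fin 3) (1 : ℝ)) ((t, x) : P3))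
      + (- ((pd ((0 : ℝ), EuclideanSpace.single (2 : Fin 3) (1 : ℝ)) s ((t, x) : P3)))) * (pd_comm (cw_smooth hv 0) ((1 : ℝ), (0 : E3)) ((0 : ℝ), EuclideanSpace.single (1 : Fin 3) (1 : ℝ)) ((t, x) : P3))
      + (((pd ((0 : ℝ), EuclideanSpace.single (0 : Fin 3) (1 : ℝ)) s ((t, x) : P3)))) * (pd_comm (cw_smooth hv 2) ((1 : ℝ), (0 : E3)) ((0 : ℝ), EuclideanSpace.single (1 : Fin 3) (1 : ℝ)) ((t, x) : P3))
      + (- ((pd ((0 : ℝ), EuclideanSpace.single (0 : Fin 3) (1 : ℝ)) (cw v 2) ((t, x) : P3))) + ((pd ((0 : ℝ), EuclideanSpace.single (2 : Fin 3) (1 : ℝ)) (cw v 0) ((t, x) : P3)))) * (pd_comm hs ((1 : ℝ), (0 : E3)) ((0 : ℝ), EuclideanSpace.single (1 : Fin 3) (1 : ℝ)) ((t, x) : P3))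
      + (((pd ((0 : ℝ), EuclideanSpace.single (1 : Fin 3) (1 : ℝ)) s ((t, x) : P3)))) * (pd_comm (cw_smooth hv 0) ((1 : ℝ), (0 : E3)) ((0 : ℝ), EuclideanSpace.single (2 : Fin 3) (1 : ℝ)) ((t, x) : P3))
      + (- ((pd ((0 : ℝ), EuclideanSpace.single (0 : Fin 3) (1 : ℝ)) s ((t, x) : P3)))) * (pd_comm (cw_smooth hv 1) ((1 : ℝ), (0 : E3)) ((0 : ℝ), EuclideanSpace.single (2 : Fin 3) (1 : ℝ)) ((t, x) : P3))
      + (((pd ((0 : ℝ), EuclideanSpace.single (0 : Fin 3) (1 : ℝ)) (cw v 1) ((t, x) : P3))) - ((pd ((0 : ℝ), EuclideanSpace.single (1 : Fin 3) (1 : ℝ)) (cw v 0) ((t, x) : P3)))) * (pd_comm hs ((1 : ℝ), (0 : E3)) ((0 : ℝ), EuclideanSpace.single (2 : Fin 3) (1 : ℝ)) ((t, x) : P3))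
      + (- ((pd ((0 : ℝ), EuclideanSpace.single (2 : Fin 3) (1 : ℝ)) s ((t, x) : P3)) * (cw u 0 ((t, x) : P3)))) * (pd_comm (cw_smooth hv 0) ((0 : ℝ), EuclideanSpace.single (0 : Fin 3) (1 : ℝ)) ((0 : ℝ), EuclideanSpace.single (1 : Fin 3) (1 : ℝ)) ((t, x) : P3))
      + (- ((pd ((0 : ℝ), EuclideanSpace.single (2 : Fin 3) (1 : ℝ)) s ((t, x) : P3)) * (cw v 0 ((t, x) : P3)))) * (pd_comm (cw_smooth hu 0) ((0 : ℝ), EuclideanSpace.single (0 : Fin 3) (1 : ℝ)) ((0 : ℝ), EuclideanSpace.single (1 : Fin 3) (1 : ℝ)) ((t, x) : P3))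
      + (- ((pd ((0 : ℝ), EuclideanSpace.single (2 : Fin 3) (1 : ℝ)) s ((t, x) : P3)) * (cw u 1 ((t, x) : P3)))) * (pd_comm (cw_smooth hv 1) ((0 : ℝ), EuclideanSpace.single (0 : Fin 3) (1 : ℝ)) ((0 : ℝ), EuclideanSpace.single (1 : Fin 3) (1 : ℝ)) ((t, x) : P3))
      + (- ((pd ((0 : ℝ), EuclideanSpace.single (2 : Fin 3) (1 : ℝ)) s ((t, x) : P3)) * (cw v 1 ((t, x) : P3)))) * (pd_comm (cw_smooth hu 1) ((0 : ℝ), EuclideanSpace.single (0 : Fin 3) (1 : ℝ)) ((0 : ℝ), EuclideanSpace.single (1 : Fin 3) (1 : ℝ)) ((t, x) : P3))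
      + (((pd ((0 : ℝ), EuclideanSpace.single (0 : Fin 3) (1 : ℝ)) s ((t, x) : P3)) * (cw u 0 ((t, x) : P3))) + ((pd ((0 : ℝ), EuclideanSpace.single (1 : Fin 3) (1 : ℝ)) s ((t, x) : P3)) * (cw u 1 ((t, x) : P3)))) * (pd_comm (cw_smooth hv 2) ((0 : ℝ), EuclideanSpace.single (0 : Fin 3) (1 : ℝ)) ((0 : ℝ), EuclideanSpace.single (1 : Fin 3) (1 : ℝ)) ((t, x) : P3))
      + (- ((pd ((0 : ℝ), EuclideanSpace.single (2 : Fin 3) (1 : ℝ)) s ((t, x) : P3)) * (cw v 2 ((t, x) : P3)))) * (pd_comm (cw_smooth hu 2) ((0 : ℝ), EuclideanSpace.single (0 : Fin 3) (1 : ℝ)) ((0 : ℝ), EuclideanSpace.single (1 : Fin 3) (1 : ℝ)) ((t, x) : P3))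
      + (- ((pd ((0 : ℝ), EuclideanSpace.single (0 : Fin 3) (1 : ℝ)) (cw v 2) ((t, x) : P3)) * (cw u 0 ((t, x) : P3))) - ((pd ((0 : ℝ), EuclideanSpace.single (1 : Fin 3) (1 : ℝ)) (cw v 2) ((t, x) : P3)) * (cw u 1 ((t, x) : P3))) + ((pd ((0 : ℝ), EuclideanSpace.single (2 : Fin 3) (1 : ℝ)) (cw v 0) ((t, x) : P3)) * (cw u 0 ((t, x) : P3))) + ((pd ((0 : ℝ), EuclideanSpace.single (2 : Fin 3) (1 : ℝ)) (cw v 1) ((t, x) : P3)) * (cw u 1 ((t, x) : P3)))) * (pd_comm hs ((0 : ℝ), EuclideanSpace.single (0 : Fin 3) (1 : ℝ)) ((0 : ℝ), EuclideanSpace.single (1 : Fin 3) (1 : ℝ)) ((t, x) : P3))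
      + (((pd ((0 : ℝ), EuclideanSpace.single (2 : Fin 3) (1 : ℝ)) s ((t, x) : P3)))) * (pd_comm hb ((0 : ℝ), EuclideanSpace.single (0 : Fin 3) (1 : ℝ)) ((0 : ℝ), EuclideanSpace.single (1 : Fin 3) (1 : ℝ)) ((t, x) : P3))
      + (((pd ((0 : ℝ), EuclideanSpace.single (1 : Fin 3) (1 : ℝ)) s ((t, x) : P3)) * (cw u 0 ((t, x) : P3)))) * (pd_comm (cw_smooth hv 0) ((0 : ℝ), EuclideanSpace.single (0 : Fin 3) (1 : ℝ)) ((0 : ℝ), EuclideanSpace.single (2 : Fin 3) (1 : ℝ)) ((t, x) : P3))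
      + (((pd ((0 : ℝ), EuclideanSpace.single (1 : Fin 3) (1 : ℝ)) s ((t, x) : P3)) * (cw v 0 ((t, x) : P3)))) * (pd_comm (cw_smooth hu 0) ((0 : ℝ), EuclideanSpace.single (0 : Fin 3) (1 : ℝ)) ((0 : ℝ), EuclideanSpace.single (2 : Fin 3) (1 : ℝ)) ((t, x) : P3))
      + (- ((pd ((0 : ℝ), EuclideanSpace.single (0 : Fin 3) (1 : ℝ)) s ((t, x) : P3)) * (cw u 0 ((t, x) : P3))) - ((pd ((0 : ℝ), EuclideanSpace.single (2 : Fin 3) (1 : ℝ)) s ((t, x) : P3)) * (cw u 2 ((t, x) : P3)))) * (pd_comm (cw_smooth hv 1) ((0 : ℝ), EuclideanSpace.single (0 : Fin 3) (1 : ℝ)) ((0 : ℝ), EuclideanSpace.single (2 : Fin 3) (1 : ℝ)) ((t, x) : P3))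
      + (((pd ((0 : ℝ), EuclideanSpace.single (1 : Fin 3) (1 : ℝ)) s ((t, x) : P3)) * (cw v 1 ((t, x) : P3)))) * (pd_comm (cw_smooth hu 1) ((0 : ℝ), EuclideanSpace.single (0 : Fin 3) (1 : ℝ)) ((0 : ℝ), EuclideanSpace.single (2 : Fin 3) (1 : ℝ)) ((t, x) : P3))
      + (((pd ((0 : ℝ), EuclideanSpace.single (1 : Fin 3) (1 : ℝ)) s ((t, x) : P3)) * (cw u 2 ((t, x) : P3)))) * (pd_comm (cw_smooth hv 2) ((0 : ℝ), EuclideanSpace.single (0 : Fin 3) (1 : ℝ)) ((0 : ℝ), EuclideanSpace.single (2 : Fin 3) (1 : ℝ)) ((t, x) : P3))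
      + (((pd ((0 : ℝ), EuclideanSpace.single (1 : Fin 3) (1 : ℝ)) s ((t, x) : P3)) * (cw v 2 ((t, x) : P3)))) * (pd_comm (cw_smooth hu 2) ((0 : ℝ), EuclideanSpace.single (0 : Fin 3) (1 : ℝ)) ((0 : ℝ), EuclideanSpace.single (2 : Fin 3) (1 : ℝ)) ((t, x) : P3))
      + (((pd ((0 : ℝ), EuclideanSpace.single (0 : Fin 3) (1 : ℝ)) (cw v 1) ((t, x) : P3)) * (cw u 0 ((t, x) : P3))) - ((pd ((0 : ℝ), EuclideanSpace.single (1 : Fin 3) (1 : ℝ)) (cw v 0) ((t, x) : P3)) * (cw u 0 ((t, x) : P3))) - ((pd ((0 : ℝ), EuclideanSpace.single (1 : Fin 3) (1 : ℝ)) (cw v 2) ((t, x) : P3)) * (cw u 2 ((t, x) : P3))) + ((pd ((0 : ℝ), EuclideanSpace.single (2 : Fin 3) (1 : ℝ)) (cw v 1) ((t, x) : P3)) * (cw u 2 ((t, x) : P3)))) * (pd_comm hs ((0 : ℝ), EuclideanSpace.single (0 : Fin 3) (1 : ℝ)) ((0 : ℝ), EuclideanSpace.single (2 : Fin 3) (1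 : ℝ)) ((t, x) : P3))
      + (- ((pd ((0 : ℝ), EuclideanSpace.single (1 : Fin 3) (1 : ℝ)) s ((t, x) : P3)))) * (pd_comm hb ((0 : ℝ), EuclideanSpace.single (0 : Fin 3) (1 : ℝ)) ((0 : ℝ), EuclideanSpace.single (2 : Fin 3) (1 : ℝ)) ((t, x) : P3))
      + (((pd ((0 : ℝ), EuclideanSpace.single (1 : Fin 3) (1 : ℝ)) s ((t, x) : P3)) * (cw u 1 ((t, x) : P3))) + ((pd ((0 : ℝ), EuclideanSpace.single (2 : Fin 3) (1 : ℝ)) s ((t, x) : P3)) * (cw u 2 ((t, x) : P3)))) * (pd_comm (cw_smooth hv 0) ((0 : ℝ), EuclideanSpace.single (1 : Fin 3) (1 : ℝ)) ((0 : ℝ), EuclideanSpace.single (2 : Fin 3) (1 : ℝ)) ((t, x) : P3))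
      + (- ((pd ((0 : ℝ), EuclideanSpace.single (0 : Fin 3) (1 : ℝ)) s ((t, x) : P3)) * (cw v 0 ((t, x) : P3)))) * (pd_comm (cw_smooth hu 0) ((0 : ℝ), EuclideanSpace.single (1 : Fin 3) (1 : ℝ)) ((0 : ℝ), EuclideanSpace.single (2 : Fin 3) (1 : ℝ)) ((t, x) : P3))
      + (- ((pd ((0 : ℝ), EuclideanSpace.single (0 : Fin 3) (1 : ℝ)) s ((t, x) : P3)) * (cw u 1 ((t, x) : P3)))) * (pd_comm (cw_smooth hv 1) ((0 : ℝ), EuclideanSpace.single (1 : Fin 3) (1 : ℝ)) ((0 : ℝ), EuclideanSpace.single (2 : Fin 3) (1 : ℝ)) ((t, x) : P3))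
      + (- ((pd ((0 : ℝ), EuclideanSpace.single (0 : Fin 3) (1 : ℝ)) s ((t, x) : P3)) * (cw v 1 ((t, x) : P3)))) * (pd_comm (cw_smooth hu 1) ((0 : ℝ), EuclideanSpace.single (1 : Fin 3) (1 : ℝ)) ((0 : ℝ), EuclideanSpace.single (2 : Fin 3) (1 : ℝ)) ((t, x) : P3))
      + (- ((pd ((0 : ℝ), EuclideanSpace.single (0 : Fin 3) (1 : ℝ)) s ((t, x) : P3)) * (cw u 2 ((t, x) : P3)))) * (pd_comm (cw_smooth hv 2) ((0 : ℝ), EuclideanSpace.single (1 : Fin 3) (1 : ℝ)) ((0 : ℝ), EuclideanSpace.single (2 : Fin 3) (1 : ℝ)) ((t, x) : P3))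
      + (- ((pd ((0 : ℝ), EuclideanSpace.single (0 : Fin 3) (1 : ℝ)) s ((t, x) : P3)) * (cw v 2 ((t, x) : P3)))) * (pd_comm (cw_smooth hu 2) ((0 : ℝ), EuclideanSpace.single (1 : Fin 3) (1 : ℝ)) ((0 : ℝ), EuclideanSpace.single (2 : Fin 3) (1 : ℝ)) ((t, x) : P3))
      + (((pd ((0 : ℝ), EuclideanSpace.single (0 : Fin 3) (1 : ℝ)) (cw v 1) ((t, x) : P3)) * (cw u 1 ((t, x) : P3))) + ((pd ((0 : ℝ), EuclideanSpace.single (0 : Fin 3) (1 : ℝ)) (cw v 2) ((t, x) : P3)) * (cw u 2 ((t, x) : P3))) - ((pd ((0 : ℝ), EuclideanSpace.single (1 : Fin 3) (1 : ℝ)) (cw v 0) ((t, x) : P3)) * (cw u 1 ((t, x) : P3))) - ((pd ((0 : ℝ), EuclideanSpace.single (2 : Fin 3) (1 : ℝ)) (cw v 0) ((t, x) : P3)) * (cw u 2 ((t, x) : P3)))) * (pd_comm hs ((0 : ℝ), EuclideanSpace.single (1 : Fin 3) (1 : ℝ)) ((0 : ℝ), EuclideanSpace.single (2 : Fin 3)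 (1 : ℝ)) ((t, x) : P3))
      + (((pd ((0 : ℝ), EuclideanSpace.single (0 : Fin 3) (1 : ℝ)) s ((t, x) : P3)))) * (pd_comm hb ((0 : ℝ), EuclideanSpace.single (1 : Fin 3) (1 : ℝ)) ((0 : ℝ), EuclideanSpace.single (2 : Fin 3) (1 : ℝ)) ((t, x) : P3))
end
end
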